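/- Let q be an odd prime and F a finite field with q elements. The group of F-linear automorphisms f of F × F satisfying Q(f(x,y)) = Q(x,y) for all (x,y), where Q(x,y) = x·y, consists exactly of the maps (x,y) ↦ (a·x, a⁻¹·y) and the maps (x,y) ↦ (a⁻¹·y, a·x) for a ∈ F^×, and this group is isomorphic to the dihedral group DihedralGroup (q − 1) of order 2(q − 1). -/
import Mathlib


/-- The group of `F`-linear automorphisms of `F × F` preserving the hyperbolic quadratic
form `Q(x,y) = x·y`, as a subgroup of `(F × F) ≃ₗ[F] (F × F)`. -/
def hyperbolicOrthogonalGroup (F : Type*) [Field F] : Subgroup ((F × F) ≃ₗ[F] (F × F)) where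
  carrier := {f : (F × F) ≃ₗ[F] (F × F) | ∀ p : F × F, (f p).1 * (f p).2 = p.1 * p.2}
  one_mem' := fun _ => rfl
  mul_mem' := by
    intro f g hf hg p
    have h : (f * g) p = f (g p) := rfl
    rw [h, hf, hg]
  inv_mem' := by
    intro f hf p
    have h : f (f⁻¹ p) = p := by
      have h1 : (f * f⁻¹) p = p := by rw [mul_inv_cancel]; rfl
      exact h1
    calc (f⁻¹ p).1 * (f⁻¹ p).2 = (f (f⁻¹ p)).1 * (f (f⁻¹ p)).2 := (hf _).symm
      _ = p.1 * p.2 := by rw [h]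

section aux
variable {F : Type*} [Field F]

def Amap (a : Fˣ) : (F × F) ≃ₗ[F] (F × F) where
  toFun p := ((a : F) * p.1, ((a⁻¹ : Fˣ) : F) * p.2)
  invFun p := (((a⁻¹ : Fˣ) : F) * p.1, (a : F) * p.2)
  map_add' p q := by ext <;> simp <;> ring
  map_smul' c p := by ext <;> simp [smul_eq_mul] <;> ring
  left_inv p := by ext <;> simp [← mul_assoc]
  right_inv p := by ext <;> simp [← mul_assoc]

def Bmap (a : Fˣ) : (F × F) ≃ₗ[F] (F × F) where
  toFun p := (((a⁻¹ : Fˣ) : F) * p.2, (a : F) * p.1)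
  invFun p := (((a⁻¹ : Fˣ) : F) * p.2, (a : F) * p.1)
  map_add' p q := by ext <;> simp <;> ring
  map_smul' c p := by ext <;> simp [smul_eq_mul] <;> ring
  left_inv p := by ext <;> simp [← mul_assoc]
  right_inv p := by ext <;> simp [← mul_assoc]

@[simp] lemma Amap_apply (a : Fˣ) (p : F × F) :
    Amap a p = ((a : F) * p.1, ((a⁻¹ : Fˣ) : F) * p.2) := rfl

@[simp] lemma Bmap_apply (a : Fˣ) (p : F × F) :
    Bmap a p = (((a⁻¹ : Fˣ) : F) * p.2, (a : F) * p.1) := rfl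

lemma Amap_mul_Amap (a b : Fˣ) : Amap a * Amap b = Amap (a * b) := by
  refine LinearEquiv.ext fun p => ?_
  show Amap a (Amap b p) = _
  ext <;> simp <;> ring

lemma Amap_mul_Bmap (a b : Fˣ) : Amap a * Bmap b = Bmap (b * a⁻¹) := by
  refine LinearEquiv.ext fun p => ?_
  show Amap a (Bmap b p) = _
  ext <;> simp <;> ring

lemma Bmap_mul_Amap (a b : Fˣ) : Bmap a * Amap b = Bmap (a * b) := by
  refine LinearEquiv.ext fun p => ?_
  show Bmap a (Amap b p) = _
  ext <;> simp <;> ring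

lemma Bmap_mul_Bmap (a b : Fˣ) : Bmap a * Bmap b = Amap (a⁻¹ * b) := by
  refine LinearEquiv.ext fun p => ?_
  show Bmap a (Bmap b p) = _
  ext <;> simp <;> ring

end aux

section aux2
variable {F : Type*} [Field F]

lemma Amap_mem (a : Fˣ) : Amap a ∈ hyperbolicOrthogonalGroup F := by
  intro p
  have : (a : F) * ((a⁻¹ : Fˣ) : F) = 1 := by
    rw [← Units.val_mul, mul_inv_cancel, Units.val_one]
  calc ((a:F) * p.1) * (((a⁻¹ : Fˣ):F) * p.2)
      = ((a:F) * ((a⁻¹:Fˣ):F)) * (p.1 * p.2) := by ring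
    _ = p.1 * p.2 := by rw [this, one_mul]

lemma Bmap_mem (a : Fˣ) : Bmap a ∈ hyperbolicOrthogonalGroup F := by
  intro p
  have : (a : F) * ((a⁻¹ : Fˣ) : F) = 1 := by
    rw [← Units.val_mul, mul_inv_cancel, Units.val_one]
  calc (((a⁻¹ : Fˣ):F) * p.2) * ((a:F) * p.1)
      = ((a:F) * ((a⁻¹:Fˣ):F)) * (p.1 * p.2) := by ring
    _ = p.1 * p.2 := by rw [this, one_mul]

lemma char_of_mem (f : (F × F) ≃ₗ[F] (F × F)) (hf : f ∈ hyperbolicOrthogonalGroup F) :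
    (∃ a : Fˣ, ∀ x y : F, f (x, y) = ((a : F) * x, ((a⁻¹ : Fˣ) : F) * y)) ∨
    (∃ a : Fˣ, ∀ x y : F, f (x, y) = (((a⁻¹ : Fˣ) : F) * y, (a : F) * x)) := by
  set a := (f (1, 0)).1 with ha'
  set b := (f (1, 0)).2 with hb'
  set c := (f (0, 1)).1 with hc'
  set d := (f (0, 1)).2 with hd'
  have hxy : ∀ x y : F, f (x, y) = (a * x + c * y, b * x + d * y) := by
    intro x y
    have h1 : (x, y) = x • ((1 : F), (0 : F)) + y • ((0 : F), (1 : F)) := by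
      simp [Prod.ext_iff]
    rw [h1, map_add, map_smul, map_smul]
    ext <;> simp [smul_eq_mul] <;> ring
  have hab : a * b = 0 := by simpa using hf (1, 0)
  have hcd : c * d = 0 := by simpa using hf (0, 1)
  have h11 : (a * 1 + c * 1) * (b * 1 + d * 1) = 1 := by
    have := hf (1, 1)
    rw [hxy 1 1] at this
    simpa using this
  have had : a * d + b * c = 1 := by linear_combination h11 - hab - hcd
  by_cases ha : a = 0
  · right
    have hbc : b * c = 1 := by rw [ha] at had; linear_combination had
    have hc0 : c ≠ 0 := fun h => by simp [h] at hbc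
    have hd0 : d = 0 := by
      rcases mul_eq_zero.mp hcd with h | h
      · exact absurd h hc0
      · exact h
    refine ⟨⟨b, c, hbc, by rw [mul_comm]; exact hbc⟩, fun x y => ?_⟩
    rw [hxy x y, ha, hd0]
    ext <;> simp <;> ring
  · left
    have hb0 : b = 0 := by
      rcases mul_eq_zero.mp hab with h | h
      · exact absurd h ha
      · exact h
    have hadd : a * d = 1 := by rw [hb0] at had; linear_combination had
    have hd0 : d ≠ 0 := fun h => by simp [h] at hadd
    have hc0 : c = 0 := by
      rcases mul_eq_zero.mp hcd with h | h
      · exact h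
      · exact absurd h hd0
    refine ⟨⟨a, d, hadd, by rw [mul_comm]; exact hadd⟩, fun x y => ?_⟩
    rw [hxy x y, hb0, hc0]
    ext <;> simp <;> ring

end aux2

/-- For an odd prime `q` and a finite field `F` with `q` elements, the group
of `F`-linear automorphisms of `F × F` preserving `Q(x,y) = x·y` consists exactly of the
maps `(x,y) ↦ (a·x, a⁻¹·y)` and `(x,y) ↦ (a⁻¹·y, a·x)` for `a ∈ Fˣ`, and is isomorphic
to the dihedral group of order `2(q−1)`. -/
theorem hyperbolicOrthogonalGroup_description_and_dihedral
    (q : ℕ) (hq : q.Prime) (hodd : Odd q)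
    (F : Type*) [Field F] [Fintype F] (hF : Fintype.card F = q) :
    (∀ f : (F × F) ≃ₗ[F] (F × F), f ∈ hyperbolicOrthogonalGroup F ↔
      ((∃ a : Fˣ, ∀ x y : F, f (x, y) = ((a : F) * x, ((a⁻¹ : Fˣ) : F) * y)) ∨
       (∃ a : Fˣ, ∀ x y : F, f (x, y) = (((a⁻¹ : Fˣ) : F) * y, (a : F) * x)))) ∧
    Nonempty (hyperbolicOrthogonalGroup F ≃* DihedralGroup (q - 1)) := by
  have hchar : ∀ f : (F × F) ≃ₗ[F] (F × F), f ∈ hyperbolicOrthogonalGroup F ↔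
      ((∃ a : Fˣ, ∀ x y : F, f (x, y) = ((a : F) * x, ((a⁻¹ : Fˣ) : F) * y)) ∨
       (∃ a : Fˣ, ∀ x y : F, f (x, y) = (((a⁻¹ : Fˣ) : F) * y, (a : F) * x))) := by
    intro f
    constructor
    · exact char_of_mem f
    · rintro (⟨a, ha⟩ | ⟨a, ha⟩)
      · have : f = Amap a := by
          refine LinearEquiv.ext fun p => ?_
          have := ha p.1 p.2
          simpa using this
        rw [this]; exact Amap_mem a
      · have : f = Bmap a := by
          refine LinearEquiv.ext fun p => ?_
          have := ha p.1 p.2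
          simpa using this
        rw [this]; exact Bmap_mem a
  refine ⟨hchar, ?_⟩
  -- setup
  have hq3 : 3 ≤ q := by
    obtain ⟨m, hm⟩ := hodd
    have h2 := hq.two_le
    omega
  haveI : NeZero (q - 1) := ⟨by omega⟩
  obtain ⟨g, hg⟩ := IsCyclic.exists_generator (α := Fˣ)
  have hcard : Nat.card Fˣ = q - 1 := by
    rw [Nat.card_units, Nat.card_eq_fintype_card, hF]
  have horder : orderOf g = q - 1 := by
    rw [orderOf_eq_card_of_forall_mem_zpowers hg, hcard]
  have key : ∀ m : ℕ, g ^ (m % (q - 1)) = g ^ m := by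
    intro m
    rw [← horder]
    exact pow_mod_orderOf g m
  set χ : ZMod (q - 1) → Fˣ := fun i => g ^ i.val with hχ
  have χ_add : ∀ i j, χ (i + j) = χ i * χ j := by
    intro i j
    show g ^ (i + j).val = g ^ i.val * g ^ j.val
    rw [ZMod.val_add, key, pow_add]
  have χ_sub : ∀ i j, χ (j - i) = (χ i)⁻¹ * χ j := by
    intro i j
    have h := χ_add (j - i) i
    rw [sub_add_cancel] at h
    rw [eq_inv_mul_iff_mul_eq, mul_comm, ← h]
  -- the homomorphism
  set Φ : DihedralGroup (q - 1) → hyperbolicOrthogonalGroup F := fun x =>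
    match x with
    | .r i => ⟨Amap (χ i), Amap_mem _⟩
    | .sr i => ⟨Bmap (χ i), Bmap_mem _⟩ with hΦ
  have Φmul : ∀ x y, Φ (x * y) = Φ x * Φ y := by
    rintro (i | i) (j | j)
    · rw [DihedralGroup.r_mul_r]
      refine Subtype.ext ?_
      simp only [hΦ]
      show Amap (χ (i + j)) = Amap (χ i) * Amap (χ j)
      rw [Amap_mul_Amap, χ_add]
    · rw [DihedralGroup.r_mul_sr]
      refine Subtype.ext ?_
      simp only [hΦ]
      show Bmap (χ (j - i)) = Amap (χ i) * Bmap (χ j)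
      rw [Amap_mul_Bmap, χ_sub, mul_comm]
    · rw [DihedralGroup.sr_mul_r]
      refine Subtype.ext ?_
      simp only [hΦ]
      show Bmap (χ (i + j)) = Bmap (χ i) * Amap (χ j)
      rw [Bmap_mul_Amap, χ_add]
    · rw [DihedralGroup.sr_mul_sr]
      refine Subtype.ext ?_
      simp only [hΦ]
      show Amap (χ (j - i)) = Bmap (χ i) * Bmap (χ j)
      rw [Bmap_mul_Bmap, χ_sub]
  let Φhom : DihedralGroup (q - 1) →* hyperbolicOrthogonalGroup F :=
    MonoidHom.mk' Φ Φmul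
  have hinj : Function.Injective Φhom := by
    rw [injective_iff_map_eq_one]
    rintro (i | i) hx
    · have h1 : Amap (χ i) = (1 : (F × F) ≃ₗ[F] (F × F)) := congrArg Subtype.val hx
      have h2 : ((χ i : Fˣ) : F) * 1 = 1 := by
        have := congrArg (fun e => (e ((1: F), (0:F))).1) h1
        simpa using this
      have h3 : χ i = 1 := Units.ext (by simpa using h2)
      have h4 : orderOf g ∣ i.val := orderOf_dvd_of_pow_eq_one h3
      have hlt : i.val < orderOf g := by rw [horder]; exact ZMod.val_lt i
      have h5 : i.val = 0 := Nat.eq_zero_of_dvd_of_lt h4 hlt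
      have h6 : i = 0 := (ZMod.val_eq_zero i).mp h5
      rw [h6]
      exact DihedralGroup.one_def.symm
    · exfalso
      have h1 : Bmap (χ i) = (1 : (F × F) ≃ₗ[F] (F × F)) := congrArg Subtype.val hx
      have h2 := congrArg (fun e => (e ((1: F), (0:F))).1) h1
      simpa using h2
  have hsurj : Function.Surjective Φhom := by
    intro y
    have hy := (hchar y.1).mp y.2
    have hpow : ∀ a : Fˣ, ∃ i : ZMod (q - 1), χ i = a := by
      intro a
      obtain ⟨k, hk⟩ := mem_powers_iff_mem_zpowers.mpr (hg a)
      refine ⟨(k : ZMod (q - 1)), ?_⟩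
      show g ^ ((k : ZMod (q-1)).val) = a
      rw [ZMod.val_natCast, key]
      exact hk
    rcases hy with ⟨a, ha⟩ | ⟨a, ha⟩
    · obtain ⟨i, hi⟩ := hpow a
      refine ⟨.r i, Subtype.ext ?_⟩
      show Amap (χ i) = y.1
      rw [hi]
      refine LinearEquiv.ext fun p => ?_
      simpa using (ha p.1 p.2).symm
    · obtain ⟨i, hi⟩ := hpow a
      refine ⟨.sr i, Subtype.ext ?_⟩
      show Bmap (χ i) = y.1
      rw [hi]
      refine LinearEquiv.ext fun p => ?_
      simpa using (ha p.1 p.2).symm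
  exact ⟨(MulEquiv.ofBijective Φhom ⟨hinj, hsurj⟩).symm⟩
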